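/- arXiv:1304.0179 — 8 statements merged into one kernel-verified Lean document; each statement's English description precedes it below -/
import Mathlib

section
/- In a nondegenerate tetrahedron, the altitude h_i and the orthocentric perpendicular n_l (for i ≠ l) intersect: both lie in the plane b_{jk}·(a_i - x) = 0 and are not parallel, hence have a common point. -/
open RealInnerProductSpace

/-- The altitude `h_m` of the tetrahedron `a 0, …, a 3`: the line through the
vertex `a m` perpendicular to the plane of the other three vertices, described
as the set of common solutions of the plane equations `⟪a r - a s, a m - x⟫ = 0`
for `r, s ≠ m`. -/
def altitude (a : Fin 4 → EuclideanSpace ℝ (Fin 3)) (m : Fin 4) :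
    Set (EuclideanSpace ℝ (Fin 3)) :=
  {x | ∀ r s : Fin 4, r ≠ m → s ≠ m → ⟪a r - a s, a m - x⟫ = 0}

/-- The orthocentric perpendicular `n_l` of the tetrahedron: the common line of
the planes through the vertex `a t` perpendicular to the opposite edge
`a r a s` of the face opposite to `a l`. -/
def orthocentricPerp (a : Fin 4 → EuclideanSpace ℝ (Fin 3)) (l : Fin 4) :
    Set (EuclideanSpace ℝ (Fin 3)) :=
  {x | ∀ r s t : Fin 4, r ≠ l → s ≠ l → t ≠ l → r ≠ s → r ≠ t → s ≠ t →
    ⟪a r - a s, a t - x⟫ = 0}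


lemma exists_point (v : Fin 3 → EuclideanSpace ℝ (Fin 3))
    (hv : LinearIndependent ℝ v) (c : Fin 3 → ℝ) :
    ∃ x, ∀ t, ⟪v t, x⟫ = c t := by
  set L : EuclideanSpace ℝ (Fin 3) →ₗ[ℝ] (Fin 3 → ℝ) :=
    LinearMap.pi (fun t => (innerSL ℝ (v t)).toLinearMap) with hL
  have hspan : Submodule.span ℝ (Set.range v) = ⊤ :=
    hv.span_eq_top_of_card_eq_finrank (by simp)
  have hinj : Function.Injective L := by
    rw [← LinearMap.ker_eq_bot, LinearMap.ker_eq_bot']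
    intro x hx
    have hx' : ∀ t, ⟪v t, x⟫ = 0 := fun t => congrFun hx t
    have hmem : x ∈ Submodule.span ℝ (Set.range v) := hspan ▸ Submodule.mem_top
    obtain ⟨d, hd⟩ := (Finsupp.mem_span_range_iff_exists_finsupp).mp hmem
    have : ⟪x, x⟫ = 0 := by
      have : ⟪x, x⟫ = ⟪d.sum fun i a => a • v i, x⟫ := by rw [hd]
      rw [this, Finsupp.sum, sum_inner]
      refine Finset.sum_eq_zero fun t _ => ?_
      rw [real_inner_smul_left, hx' t, mul_zero]
    exact inner_self_eq_zero.mp this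
  have hsurj : Function.Surjective L :=
    (LinearMap.injective_iff_surjective_of_finrank_eq_finrank (by simp)).mp hinj
  obtain ⟨x, hx⟩ := hsurj c
  exact ⟨x, fun t => congrFun hx t⟩

lemma aux4 : ∀ i l : Fin 4, i ≠ l → ∃ j k : Fin 4,
    i ≠ j ∧ i ≠ k ∧ j ≠ k ∧ j ≠ l ∧ k ≠ l ∧
    ∀ m : Fin 4, m = i ∨ m = j ∨ m = k ∨ m = l := by decide

/-- In a nondegenerate tetrahedron, each orthocentric perpendicular `n_l` meets
every altitude `h_i` with `i ≠ l`. -/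
theorem stmt_4 (a : Fin 4 → EuclideanSpace ℝ (Fin 3))
    (ha : AffineIndependent ℝ a)
    (i l : Fin 4) (hil : i ≠ l) :
    ∃ x, x ∈ altitude a i ∧ x ∈ orthocentricPerp a l := by
  obtain ⟨j, k, hij, hik, hjk, hjl, hkl, hcov⟩ := aux4 i l hil
  have hginj : Function.Injective
      (![⟨i, hik⟩, ⟨j, hjk⟩, ⟨l, Ne.symm hkl⟩] : Fin 3 → {x : Fin 4 // x ≠ k}) := by
    intro s t hst
    have hst' : ((![⟨i, hik⟩, ⟨j, hjk⟩, ⟨l, Ne.symm hkl⟩] :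
        Fin 3 → {x : Fin 4 // x ≠ k}) s : Fin 4) =
        (![⟨i, hik⟩, ⟨j, hjk⟩, ⟨l, Ne.symm hkl⟩] :
        Fin 3 → {x : Fin 4 // x ≠ k}) t := congrArg Subtype.val hst
    fin_cases s <;> fin_cases t <;>
      simp only [Matrix.cons_val_zero, Matrix.cons_val_one, Matrix.head_cons,
        Matrix.cons_val_two, Matrix.tail_cons] at hst' <;>
      first
        | rfl
        | exact absurd hst' hij
        | exact absurd hst' hij.symm
        | exact absurd hst' hil
        | exact absurd hst' hil.symm
        | exact absurd hst' hjl
        | exact absurd hst' hjl.symm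
  have hli : LinearIndependent ℝ ![a i - a k, a j - a k, a l - a k] := by
    have h := ((affineIndependent_iff_linearIndependent_vsub ℝ a k).mp ha).comp
      _ hginj
    have he : ((fun m : {x : Fin 4 // x ≠ k} => a ↑m -ᵥ a k) ∘
        (![⟨i, hik⟩, ⟨j, hjk⟩, ⟨l, Ne.symm hkl⟩] : Fin 3 → {x : Fin 4 // x ≠ k}))
        = ![a i - a k, a j - a k, a l - a k] := by
      funext t
      fin_cases t <;> simp [vsub_eq_sub]
    rwa [he] at h
  obtain ⟨x, hx⟩ := exists_point _ hli
    ![⟪a i - a k, a j⟫, ⟪a j - a k, a i⟫, ⟪a l - a k, a i⟫]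
  have h0 := hx 0
  have h1 := hx 1
  have h2 := hx 2
  simp only [Matrix.cons_val_zero, Matrix.cons_val_one, Matrix.head_cons,
    Matrix.cons_val_two, Matrix.tail_cons] at h0 h1 h2
  have K1 : ⟪a j - a k, a i - x⟫ = 0 := by rw [inner_sub_right, h1, sub_self]
  have K2 : ⟪a i - a k, a j - x⟫ = 0 := by rw [inner_sub_right, h0, sub_self]
  have KL : ⟪a l - a k, a i - x⟫ = 0 := by rw [inner_sub_right, h2, sub_self]
  have K3 : ⟪a i - a j, a k - x⟫ = 0 := by
    have e1 := K1
    have e2 := K2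
    simp only [inner_sub_left, inner_sub_right] at e1 e2 ⊢
    linarith [real_inner_comm (a i) (a j), real_inner_comm (a i) (a k),
      real_inner_comm (a j) (a k), real_inner_comm (a i) x,
      real_inner_comm (a j) x, real_inner_comm (a k) x]
  have K1' : ⟪a k - a j, a i - x⟫ = 0 := by
    rw [← neg_sub, inner_neg_left, K1, neg_zero]
  have K2' : ⟪a k - a i, a j - x⟫ = 0 := by
    rw [← neg_sub, inner_neg_left, K2, neg_zero]
  have K3' : ⟪a j - a i, a k - x⟫ = 0 := by
    rw [← neg_sub, inner_neg_left, K3, neg_zero]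
  have hAlt : ∀ r, r ≠ i → ⟪a r - a k, a i - x⟫ = 0 := by
    intro r hr
    rcases hcov r with rfl | rfl | rfl | rfl
    · exact absurd rfl hr
    · exact K1
    · simp
    · exact KL
  have mem3 : ∀ m : Fin 4, m ≠ l → m = i ∨ m = j ∨ m = k := by
    intro m hm
    rcases hcov m with h | h | h | h
    · exact Or.inl h
    · exact Or.inr (Or.inl h)
    · exact Or.inr (Or.inr h)
    · exact absurd h hm
  refine ⟨x, ?_, ?_⟩
  · intro r s hr hs
    have : a r - a s = (a r - a k) - (a s - a k) := by abel
    rw [this, inner_sub_left, hAlt r hr, hAlt s hs, sub_zero]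
  · intro r s t hr hs ht hrs hrt hst
    rcases mem3 r hr with rfl | rfl | rfl <;>
      rcases mem3 s hs with rfl | rfl | rfl <;>
        rcases mem3 t ht with rfl | rfl | rfl <;>
      first
        | exact K1 | exact K2 | exact K3 | exact K1' | exact K2' | exact K3'
        | exact absurd rfl hrs
        | exact absurd rfl hrt
        | exact absurd rfl hst
end

section
/- In a nondegenerate tetrahedron, the altitudes h_i and h_j have a common point if and only if the opposite edges a_i a_j and a_k a_l are orthogonal, i.e., (a_k - a_l)·(a_i - a_j) = 0. -/
/-! Translating to `a l = 0`, a common point `a l + y` of `h_i` and `h_j` is a vector `y` with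
`⟪u, y⟫ = ⟪u, v⟫`, `⟪v, y⟫ = ⟪v, u⟫` and `⟪w, y⟫ = ⟪w, u⟫ = ⟪w, v⟫`, where `u, v, w` are the edges
from `a l` to `a i, a j, a k`. Since `u, v, w` are linearly independent, inner products against
them can be prescribed arbitrarily, so such a `y` exists exactly when `⟪w, u - v⟫ = 0`. -/

open RealInnerProductSpace

theorem LinearIndependent.exists_inner_eq {ι E : Type*} [Finite ι] [NormedAddCommGroup E]
    [InnerProductSpace ℝ E] {b : ι → E} (hb : LinearIndependent ℝ b) (c : ι → ℝ) :
    ∃ y, ∀ p, ⟪b p, y⟫ = c p := by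
  let K := Submodule.span ℝ (Set.range b)
  have : FiniteDimensional ℝ K := FiniteDimensional.span_of_finite ℝ (Set.finite_range b)
  let B := Module.Basis.span hb
  let f : StrongDual ℝ K := LinearMap.toContinuousLinearMap (B.constr ℝ c)
  refine ⟨((InnerProductSpace.toDual ℝ K).symm f : E), fun p => ?_⟩
  have hBp : (B p : E) = b p := by simp [B, Module.Basis.span_apply]
  rw [← hBp, ← Submodule.coe_inner, real_inner_comm, InnerProductSpace.toDual_symm_apply]
  simp [f, Module.Basis.constr_basis]

theorem mem_altitude_iff {a : Fin 4 → EuclideanSpace ℝ (Fin 3)} {m p : Fin 4} (hpm : p ≠ m)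
    {x : EuclideanSpace ℝ (Fin 3)} :
    x ∈ altitude a m ↔ ∀ r, r ≠ m → r ≠ p → ⟪a r - a p, a m - x⟫ = 0 := by
  refine ⟨fun hx r hrm _ => hx r p hrm hpm, fun hx r s hrm hsm => ?_⟩
  have key : ∀ t, t ≠ m → ⟪a t - a p, a m - x⟫ = 0 := fun t htm => by
    rcases eq_or_ne t p with rfl | htp
    · simp
    · exact hx t htm htp
  rw [← sub_sub_sub_cancel_right (a r) (a s) (a p), inner_sub_left, key r hrm, key s hsm,
    sub_zero]

/-- In a nondegenerate tetrahedron, the altitudes `h_i` and `h_j` have a common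
point if and only if the opposite edges `a_i a_j` and `a_k a_l` are orthogonal,
i.e. `(a_k - a_l)·(a_i - a_j) = 0`. -/
theorem stmt_5 (a : Fin 4 → EuclideanSpace ℝ (Fin 3))
    (ha : AffineIndependent ℝ a)
    (i j k l : Fin 4) (hij : i ≠ j) (hik : i ≠ k) (hil : i ≠ l)
    (hjk : j ≠ k) (hjl : j ≠ l) (hkl : k ≠ l) :
    (∃ x, x ∈ altitude a i ∧ x ∈ altitude a j) ↔ ⟪a k - a l, a i - a j⟫ = 0 := by
  constructor
  · rintro ⟨x, hxi, hxj⟩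
    rw [← sub_sub_sub_cancel_right (a i) (a j) x, inner_sub_right, hxi k l hik.symm hil.symm,
      hxj k l hjk.symm hjl.symm, sub_zero]
  · intro horth
    obtain ⟨y, hy⟩ := ((affineIndependent_iff_linearIndependent_vsub ℝ a l).1 ha).exists_inner_eq
      fun r => ⟪a r - a l, (if r.1 = i then a j else a i) - a l⟫
    have hy' : ∀ r (hrl : r ≠ l), ⟪a r - a l, y⟫ =
        ⟪a r - a l, (if r = i then a j else a i) - a l⟫ := fun r hrl => hy ⟨r, hrl⟩
    have hsub : ∀ m, a m - (a l + y) = (a m - a l) - y := fun m => by abel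
    refine ⟨a l + y, (mem_altitude_iff hil.symm).2 fun r hri hrl => ?_,
      (mem_altitude_iff hjl.symm).2 fun r hrj hrl => ?_⟩
    · rw [hsub, inner_sub_right, hy' r hrl, if_neg hri, sub_self]
    · rw [hsub, inner_sub_right, hy' r hrl]
      rcases eq_or_ne r i with rfl | hri
      · rw [if_pos rfl, sub_self]
      · obtain rfl : r = k := by omega
        rw [if_neg hri, ← inner_sub_right, sub_sub_sub_cancel_right, ← neg_sub (a i),
          inner_neg_right, horth, neg_zero]
end

section
/- In a nondegenerate tetrahedron, if altitude h_i meets both h_j and h_k (with i, j, k distinct), then all four altitudes are concurrent at a single point. -/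
open RealInnerProductSpace

lemma ortho (a : Fin 4 → EuclideanSpace ℝ (Fin 3)) (i j k l : Fin 4)
    (hki : k ≠ i) (hkj : k ≠ j) (hli : l ≠ i) (hlj : l ≠ j)
    (h : ∃ x, x ∈ altitude a i ∧ x ∈ altitude a j) :
    ⟪a k - a l, a i - a j⟫ = 0 := by
  obtain ⟨x, hxi, hxj⟩ := h
  have h1 := hxi k l hki hli
  have h2 := hxj k l hkj hlj
  have : a i - a j = (a i - x) - (a j - x) := by abel
  rw [this, inner_sub_right, h1, h2]
  ring

lemma exists_point_s6 (a : Fin 4 → EuclideanSpace ℝ (Fin 3))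
    (ha : AffineIndependent ℝ a) (c : Fin 3 → ℝ) :
    ∃ p : EuclideanSpace ℝ (Fin 3), ∀ r : Fin 3, ⟪a r.succ - a (0:Fin 4), p⟫ = c r := by
  set v : Fin 3 → EuclideanSpace ℝ (Fin 3) := fun r => a r.succ - a 0 with hv
  have hli : LinearIndependent ℝ v := by
    have h0 := (affineIndependent_iff_linearIndependent_vsub ℝ a 0).mp ha
    have : v = (fun i : {x : Fin 4 // x ≠ 0} => a i -ᵥ a 0) ∘
        (fun r : Fin 3 => (⟨r.succ, Fin.succ_ne_zero r⟩ : {x : Fin 4 // x ≠ 0})) := rfl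
    rw [this]
    exact h0.comp _ (fun r s h => by simpa [Fin.succ_inj] using Subtype.mk_eq_mk.mp h)
  have hspan : Submodule.span ℝ (Set.range v) = ⊤ := by
    apply hli.span_eq_top_of_card_eq_finrank
    simp [finrank_euclideanSpace]
  let L : EuclideanSpace ℝ (Fin 3) →ₗ[ℝ] (Fin 3 → ℝ) :=
    { toFun := fun x => fun r => ⟪v r, x⟫
      map_add' := fun x y => by ext r; simp [inner_add_right]
      map_smul' := fun m x => by ext r; simp [inner_smul_right] }
  have hinj : Function.Injective L := by
    rw [← LinearMap.ker_eq_bot]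
    rw [Submodule.eq_bot_iff]
    intro x hx
    have hx' : ∀ r, ⟪v r, x⟫ = 0 := fun r => congrFun hx r
    have : x ∈ (Submodule.span ℝ (Set.range v))ᗮ := by
      rw [Submodule.mem_orthogonal]
      intro u hu
      induction hu using Submodule.span_induction with
      | mem u hu => obtain ⟨r, rfl⟩ := hu; exact hx' r
      | zero => simp
      | add u w _ _ h1 h2 => rw [inner_add_left, h1, h2]; ring
      | smul c u _ h1 => rw [inner_smul_left, h1]; ring
    rw [hspan, Submodule.top_orthogonal_eq_bot] at this
    simpa using this
  have hsurj : Function.Surjective L :=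
    (LinearMap.injective_iff_surjective_of_finrank_eq_finrank (by simp [finrank_euclideanSpace])).mp hinj
  obtain ⟨p, hp⟩ := hsurj c
  exact ⟨p, fun r => congrFun hp r⟩

lemma garith (d : Fin 4 → Fin 4 → ℝ) (hs : ∀ m n, d m n = d n m)
    (T1 : d 0 1 + d 2 3 = d 0 2 + d 1 3) (T2 : d 0 1 + d 2 3 = d 0 3 + d 1 2) :
    ∀ m n : Fin 4, m ≠ n →
      d m n = ((∑ s : Fin 4, d m s) - d m m - (d 0 1 + d 2 3))/2
            + ((∑ s : Fin 4, d n s) - d n n - (d 0 1 + d 2 3))/2 := by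
  intro m n hmn
  fin_cases m <;> fin_cases n <;> simp_all [Fin.sum_univ_four] <;>
    linarith [hs 0 1, hs 0 2, hs 0 3, hs 1 2, hs 1 3, hs 2 3,
      hs 1 0, hs 2 0, hs 3 0, hs 2 1, hs 3 1, hs 3 2]

lemma main_from_t (a : Fin 4 → EuclideanSpace ℝ (Fin 3))
    (ha : AffineIndependent ℝ a)
    (T1 : ⟪a 0, a 1⟫ + ⟪a 2, a 3⟫ = ⟪a 0, a 2⟫ + ⟪a 1, a 3⟫)
    (T2 : ⟪a 0, a 1⟫ + ⟪a 2, a 3⟫ = ⟪a 0, a 3⟫ + ⟪a 1, a 2⟫) :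
    ∃ p, ∀ m : Fin 4, p ∈ altitude a m := by
  set d : Fin 4 → Fin 4 → ℝ := fun m n => ⟪a m, a n⟫ with hd
  set g : Fin 4 → ℝ :=
      fun m => ((∑ s : Fin 4, d m s) - d m m - (d 0 1 + d 2 3))/2 with hgdef
  have G : ∀ m n : Fin 4, m ≠ n → d m n = g m + g n :=
    garith d (fun m n => real_inner_comm (a n) (a m)) T1 T2
  obtain ⟨p, hp⟩ := exists_point_s6 a ha (fun r => g r.succ - g 0)
  have hp' : ∀ m : Fin 4, ⟪a m - a 0, p⟫ = g m - g 0 := by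
    intro m
    rcases Fin.eq_zero_or_eq_succ m with rfl | ⟨r, rfl⟩
    · simp
    · exact hp r
  have hp2 : ∀ r s : Fin 4, ⟪a r - a s, p⟫ = g r - g s := by
    intro r s
    have : a r - a s = (a r - a 0) - (a s - a 0) := by abel
    rw [this, inner_sub_left, hp' r, hp' s]; ring
  refine ⟨p, fun m r s hr hs => ?_⟩
  have e1 : ⟪a r - a s, a m⟫ = g r - g s := by
    rw [inner_sub_left]
    have := G r m hr; have := G s m hs; simp only [hd] at *; linarith
  rw [inner_sub_right, e1, hp2]; ring

set_option maxHeartbeats 1600000 in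
lemma tarith (d : Fin 4 → Fin 4 → ℝ) (hs : ∀ m n, d m n = d n m)
    (i j k l : Fin 4) (hij : i ≠ j) (hik : i ≠ k) (hil : i ≠ l)
    (hjk : j ≠ k) (hjl : j ≠ l) (hkl : k ≠ l)
    (O1 : d k i - d k j - d l i + d l j = 0)
    (O2 : d j i - d j k - d l i + d l k = 0) :
    d 0 1 + d 2 3 = d 0 2 + d 1 3 ∧ d 0 1 + d 2 3 = d 0 3 + d 1 2 := by
  fin_cases i <;> fin_cases j <;> fin_cases k <;> fin_cases l <;> simp_all <;>
    constructor <;>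
    linarith [hs 0 1, hs 0 2, hs 0 3, hs 1 2, hs 1 3, hs 2 3,
      hs 1 0, hs 2 0, hs 3 0, hs 2 1, hs 3 1, hs 3 2]

/-- If one altitude of a nondegenerate tetrahedron meets two other altitudes,
then all four altitudes are concurrent at a single point. -/
theorem stmt_6 (a : Fin 4 → EuclideanSpace ℝ (Fin 3))
    (ha : AffineIndependent ℝ a)
    (i j k : Fin 4) (hij : i ≠ j) (hik : i ≠ k) (hjk : j ≠ k)
    (h1 : ∃ x, x ∈ altitude a i ∧ x ∈ altitude a j)
    (h2 : ∃ x, x ∈ altitude a i ∧ x ∈ altitude a k) :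
    ∃ p, ∀ m : Fin 4, p ∈ altitude a m := by
  set l : Fin 4 := 2 - (i + j + k) with hl
  have hdist : l ≠ i ∧ l ≠ j ∧ l ≠ k := by
    have : ∀ i j k : Fin 4, i ≠ j → i ≠ k → j ≠ k →
        (2 - (i + j + k) ≠ i ∧ 2 - (i + j + k) ≠ j ∧ 2 - (i + j + k) ≠ k) := by decide
    exact this i j k hij hik hjk
  obtain ⟨hli, hlj, hlk⟩ := hdist
  have O1 := ortho a i j k l (Ne.symm hik) hjk.symm hli hlj h1
  have O2 := ortho a i k j l hij.symm hjk hli hlk h2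
  set d : Fin 4 → Fin 4 → ℝ := fun m n => ⟪a m, a n⟫ with hd
  have hs : ∀ m n, d m n = d n m := fun m n => real_inner_comm (a n) (a m)
  have E1 : d k i - d k j - d l i + d l j = 0 := by
    have : ⟪a k - a l, a i - a j⟫ = d k i - d k j - d l i + d l j := by
      simp only [inner_sub_left, inner_sub_right, hd]; ring
    rw [← this]; exact O1
  have E2 : d j i - d j k - d l i + d l k = 0 := by
    have : ⟪a j - a l, a i - a k⟫ = d j i - d j k - d l i + d l k := by
      simp only [inner_sub_left, inner_sub_right, hd]; ring
    rw [← this]; exact O2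
  obtain ⟨T1, T2⟩ := tarith d hs i j k l hij hik hli.symm hjk hlj.symm hlk.symm E1 E2
  exact main_from_t a ha T1 T2
end

section
/- For a nondegenerate tetrahedron, the six midplanes, where the midplane associated with edge {i,j} is given by the equation b_{ij}·(a_k + a_l - 2x) = 0, have a unique common point (the Monge point). -/
open RealInnerProductSpace

private lemma quad_univ {i j k l : Fin 4} (hij : i ≠ j) (hik : i ≠ k) (hil : i ≠ l)
    (hjk : j ≠ k) (hjl : j ≠ l) (hkl : k ≠ l) :
    ({i, j, k, l} : Finset (Fin 4)) = Finset.univ := by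
  apply Finset.eq_univ_of_card
  rw [Finset.card_insert_of_notMem (by simp [hij, hik, hil]),
      Finset.card_insert_of_notMem (by simp [hjk, hjl]),
      Finset.card_insert_of_notMem (by simp [hkl]),
      Finset.card_singleton]
  rfl

private lemma quad_sum (a : Fin 4 → EuclideanSpace ℝ (Fin 3)) {i j k l : Fin 4}
    (hij : i ≠ j) (hik : i ≠ k) (hil : i ≠ l)
    (hjk : j ≠ k) (hjl : j ≠ l) (hkl : k ≠ l) :
    a i + a j + a k + a l = ∑ x, a x := by
  rw [← quad_univ hij hik hil hjk hjl hkl,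
      Finset.sum_insert (by simp [hij, hik, hil]),
      Finset.sum_insert (by simp [hjk, hjl]),
      Finset.sum_pair hkl]
  abel

private lemma inner_key (x y c : EuclideanSpace ℝ (Fin 3)) :
    ⟪x - y, (2:ℝ) • c - x - y⟫ = ‖y - c‖^2 - ‖x - c‖^2 := by
  have h1 : x - y = (x - c) - (y - c) := by abel
  have h2 : (2:ℝ) • c - x - y = -((x - c) + (y - c)) := by
    rw [two_smul]; abel
  rw [h1, h2, inner_neg_right, inner_sub_left, inner_add_right, inner_add_right,
      real_inner_self_eq_norm_sq, real_inner_self_eq_norm_sq, real_inner_comm]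
  ring

/-- All six midplanes of a nondegenerate tetrahedron (the midplane of the edge
`{i,j}` is `⟪a_i - a_j, a_k + a_l - 2x⟫ = 0`, where `{k,l}` is the
complementary pair) are concurrent at a unique point, the Monge point. -/
theorem stmt_7 (a : Fin 4 → EuclideanSpace ℝ (Fin 3))
    (ha : AffineIndependent ℝ a) :
    ∃! m : EuclideanSpace ℝ (Fin 3),
      ∀ i j k l : Fin 4, i ≠ j → i ≠ k → i ≠ l → j ≠ k → j ≠ l → k ≠ l →
        ⟪a i - a j, a k + a l - (2 : ℝ) • m⟫ = 0 := by
  set S : Affine.Simplex ℝ (EuclideanSpace ℝ (Fin 3)) 3 := ⟨a, ha⟩ with hS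
  have htop : affineSpan ℝ (Set.range a) = ⊤ := by
    rw [ha.affineSpan_eq_top_iff_card_eq_finrank_add_one]
    simp [finrank_euclideanSpace]
  set s : EuclideanSpace ℝ (Fin 3) := ∑ x, a x with hs
  set c : EuclideanSpace ℝ (Fin 3) := S.circumcenter with hc
  refine ⟨(2:ℝ)⁻¹ • s - c, ?_, ?_⟩
  · intro i j k l hij hik hil hjk hjl hkl
    have hkey : a k + a l - (2:ℝ) • ((2:ℝ)⁻¹ • s - c) = (2:ℝ) • c - a i - a j := by
      rw [smul_sub, smul_inv_smul₀ (by norm_num : (2:ℝ) ≠ 0), hs,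
          ← quad_sum a hij hik hil hjk hjl hkl]
      abel
    rw [hkey, inner_key]
    have hi : dist (a i) c = S.circumradius := S.dist_circumcenter_eq_circumradius i
    have hj : dist (a j) c = S.circumradius := S.dist_circumcenter_eq_circumradius j
    rw [dist_eq_norm] at hi hj
    rw [hi, hj]; ring
  · intro m hm
    set c' : EuclideanSpace ℝ (Fin 3) := (2:ℝ)⁻¹ • s - m with hc'
    have key : ∀ i j k l : Fin 4, i ≠ j → i ≠ k → i ≠ l → j ≠ k → j ≠ l → k ≠ l →
        ‖a j - c'‖ = ‖a i - c'‖ := by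
      intro i j k l hij hik hil hjk hjl hkl
      have h0 := hm i j k l hij hik hil hjk hjl hkl
      have hkey : a k + a l - (2:ℝ) • m = (2:ℝ) • c' - a i - a j := by
        rw [hc', smul_sub, smul_inv_smul₀ (by norm_num : (2:ℝ) ≠ 0), hs,
            ← quad_sum a hij hik hil hjk hjl hkl]
        abel
      rw [hkey, inner_key] at h0
      exact (sq_eq_sq₀ (norm_nonneg _) (norm_nonneg _)).mp (sub_eq_zero.mp h0)
    have hdist : ∀ i : Fin 4, dist (a i) c' = dist (a 0) c' := by
      intro i
      fin_cases i
      · rfl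
      · simpa [dist_eq_norm] using key 0 1 2 3 (by decide) (by decide) (by decide)
          (by decide) (by decide) (by decide)
      · simpa [dist_eq_norm] using key 0 2 1 3 (by decide) (by decide) (by decide)
          (by decide) (by decide) (by decide)
      · simpa [dist_eq_norm] using key 0 3 1 2 (by decide) (by decide) (by decide)
          (by decide) (by decide) (by decide)
    have hmem : c' ∈ affineSpan ℝ (Set.range S.points) := by
      rw [show Set.range S.points = Set.range a from rfl, htop]; trivial
    have hcc : c' = c := S.eq_circumcenter_of_dist_eq hmem hdist
    have : m = (2:ℝ)⁻¹ • s - c' := by rw [hc']; abel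
    rw [this, hcc]
end

section
/- If Q is a traceless quadratic form on ℝ³ of rank 3 and g is a line through the origin contained in the cone {x : Q(x) = 0}, then there exist lines g₁ and g₂ also contained in the cone such that g, g₁, g₂ are mutually orthogonal. -/
open Matrix

/-!
The trace of `Q` is the sum of `Q` over an orthonormal basis. For `w ⟂ v`, the vectors `v`, `w`,
`v ⨯₃ w` form an orthogonal basis, so `Q v = 0` makes the restriction of `Q` to the plane `v⟂`
traceless. In orthonormal coordinates of that plane it reads `a x² + 2 b x y - a y²`, whose two
null lines have slopes with product `-1`, i.e. are orthogonal.
-/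

theorem dotProduct_self_pos {ι : Type*} [Fintype ι] {v : ι → ℝ} (hv : v ≠ 0) : 0 < v ⬝ᵥ v :=
  (Finset.sum_nonneg fun i _ => mul_self_nonneg (v i)).lt_of_ne' (dotProduct_self_eq_zero.not.2 hv)

theorem dotProduct_eq_zero_of_mem_span_pair {R ι : Type*} [CommRing R] [Fintype ι]
    {v w c u : ι → R} (hvw : v ⬝ᵥ w = 0) (hvc : v ⬝ᵥ c = 0) (hu : u ∈ Submodule.span R {w, c}) :
    v ⬝ᵥ u = 0 := by
  obtain ⟨a, b, rfl⟩ := Submodule.mem_span_pair.1 hu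
  simp [dotProduct_add, hvw, hvc]

theorem exists_quadratic_eq_zero_of_mul_nonpos {a c : ℝ} (b : ℝ) (ha : a ≠ 0) (hac : a * c ≤ 0) :
    ∃ x, a * (x * x) + b * x + c = 0 :=
  exists_quadratic_eq_zero ha
    ⟨√(discrim a b c), (Real.mul_self_sqrt (by rw [discrim]; nlinarith [sq_nonneg b])).symm⟩

section Plane

variable {ι : Type*} [Fintype ι]

theorem smul_add_smul_dotProduct_mulVec_smul_add_smul (M : Matrix ι ι ℝ) (w c : ι → ℝ)
    (a b : ℝ) :
    (a • w + b • c) ⬝ᵥ M *ᵥ (a • w + b • c) =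
      a ^ 2 * (w ⬝ᵥ M *ᵥ w) + a * b * (w ⬝ᵥ M *ᵥ c + c ⬝ᵥ M *ᵥ w) + b ^ 2 * (c ⬝ᵥ M *ᵥ c) := by
  simp only [mulVec_add, mulVec_smul, dotProduct_add, add_dotProduct, dotProduct_smul,
    smul_dotProduct, smul_eq_mul]
  ring

theorem smul_add_smul_dotProduct_smul_add_smul {w c : ι → ℝ} (hwc : w ⬝ᵥ c = 0)
    (a b a' b' : ℝ) :
    (a • w + b • c) ⬝ᵥ (a' • w + b' • c) = a * a' * (w ⬝ᵥ w) + b * b' * (c ⬝ᵥ c) := by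
  simp only [dotProduct_add, add_dotProduct, dotProduct_smul, smul_dotProduct, smul_eq_mul,
    hwc, dotProduct_comm c w]
  ring

theorem exists_orthogonal_isotropic_pair_of_traceless {M : Matrix ι ι ℝ} {w c : ι → ℝ}
    (hw : w ≠ 0) (hc : c ≠ 0) (hwc : w ⬝ᵥ c = 0)
    (htr : w ⬝ᵥ M *ᵥ w * (c ⬝ᵥ c) + c ⬝ᵥ M *ᵥ c * (w ⬝ᵥ w) = 0) :
    ∃ u₁ ∈ Submodule.span ℝ {w, c}, ∃ u₂ ∈ Submodule.span ℝ {w, c}, u₁ ≠ 0 ∧ u₂ ≠ 0 ∧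
      u₁ ⬝ᵥ M *ᵥ u₁ = 0 ∧ u₂ ⬝ᵥ M *ᵥ u₂ = 0 ∧ u₁ ⬝ᵥ u₂ = 0 := by
  have hp := dotProduct_self_pos hw
  have hq := dotProduct_self_pos hc
  set p := w ⬝ᵥ w
  set q := c ⬝ᵥ c
  set A := w ⬝ᵥ M *ᵥ w
  set C := c ⬝ᵥ M *ᵥ c
  set B := w ⬝ᵥ M *ᵥ c + c ⬝ᵥ M *ᵥ w
  obtain ⟨t, ht⟩ : ∃ t, A * (t * t) + B * t + C = 0 := by
    by_cases hA : A = 0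
    · refine ⟨0, ?_⟩
      rw [hA] at htr
      simpa [hp.ne'] using htr
    · refine exists_quadratic_eq_zero_of_mul_nonpos B hA (nonpos_of_mul_nonpos_right ?_ hp)
      have hAC : p * (A * C) = -(A ^ 2 * q) := by linear_combination A * htr
      rw [hAC, neg_nonpos]
      positivity
  -- `u₂` is `u₁` turned by a right angle inside the plane.
  refine ⟨t • w + (1 : ℝ) • c, Submodule.mem_span_pair.2 ⟨t, 1, rfl⟩,
    (-q) • w + (t * p) • c, Submodule.mem_span_pair.2 ⟨-q, t * p, rfl⟩, ?_, ?_, ?_, ?_, ?_⟩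
  · refine dotProduct_self_eq_zero.not.1 (ne_of_gt ?_)
    rw [smul_add_smul_dotProduct_smul_add_smul hwc]
    nlinarith [mul_nonneg (mul_self_nonneg t) hp.le]
  · refine dotProduct_self_eq_zero.not.1 (ne_of_gt ?_)
    rw [smul_add_smul_dotProduct_smul_add_smul hwc]
    have : 0 < q * q * p := by positivity
    nlinarith [mul_nonneg (mul_self_nonneg (t * p)) hq.le]
  · rw [smul_add_smul_dotProduct_mulVec_smul_add_smul]
    linear_combination ht
  · rw [smul_add_smul_dotProduct_mulVec_smul_add_smul]
    linear_combination (-(p * q)) * ht + (q + p * t ^ 2) * htr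
  · rw [smul_add_smul_dotProduct_smul_add_smul hwc]
    ring

end Plane

theorem trace_mul_cross_dot_cross {R : Type*} [CommRing R] (M : Matrix (Fin 3) (Fin 3) R)
    (v w : Fin 3 → R) :
    M.trace * (v ⨯₃ w ⬝ᵥ v ⨯₃ w) = v ⨯₃ w ⬝ᵥ M *ᵥ (v ⨯₃ w) + v ⬝ᵥ M *ᵥ v * (w ⬝ᵥ w)
      + w ⬝ᵥ M *ᵥ w * (v ⬝ᵥ v) - v ⬝ᵥ w * (v ⬝ᵥ M *ᵥ w + w ⬝ᵥ M *ᵥ v) := by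
  simp only [cross_apply, vec3_dotProduct, mulVec, trace, diag, Fin.sum_univ_three]
  dsimp only [Matrix.cons_val]
  ring

theorem stmt_12_general (M : Matrix (Fin 3) (Fin 3) ℝ)
    (htr : M.trace = 0)
    (v : Fin 3 → ℝ) (hv : v ≠ 0) (hvQ : v ⬝ᵥ M.mulVec v = 0) :
    ∃ v₁ v₂ : Fin 3 → ℝ, v₁ ≠ 0 ∧ v₂ ≠ 0 ∧
      v₁ ⬝ᵥ M.mulVec v₁ = 0 ∧ v₂ ⬝ᵥ M.mulVec v₂ = 0 ∧
      v ⬝ᵥ v₁ = 0 ∧ v ⬝ᵥ v₂ = 0 ∧ v₁ ⬝ᵥ v₂ = 0 := by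
  obtain ⟨w, hw, hwv⟩ := exists_ne_zero_dotProduct_eq_zero v
  have hvw : v ⬝ᵥ w = 0 := by rwa [dotProduct_comm]
  have hcc : v ⨯₃ w ⬝ᵥ v ⨯₃ w = v ⬝ᵥ v * (w ⬝ᵥ w) := by simp [cross_dot_cross, hvw]
  have hc : v ⨯₃ w ≠ 0 := by
    refine dotProduct_self_eq_zero.not.1 ?_
    rw [hcc]
    exact (mul_pos (dotProduct_self_pos hv) (dotProduct_self_pos hw)).ne'
  have hplane : w ⬝ᵥ M *ᵥ w * (v ⨯₃ w ⬝ᵥ v ⨯₃ w) + v ⨯₃ w ⬝ᵥ M *ᵥ (v ⨯₃ w) * (w ⬝ᵥ w) = 0 := by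
    have := trace_mul_cross_dot_cross M v w
    rw [htr, hvQ, hvw] at this
    rw [hcc]
    linear_combination (-(w ⬝ᵥ w)) * this
  obtain ⟨v₁, hv₁, v₂, hv₂, h₁, h₂, hQ₁, hQ₂, h₁₂⟩ :=
    exists_orthogonal_isotropic_pair_of_traceless hw hc (dot_cross_self v w) hplane
  exact ⟨v₁, v₂, h₁, h₂, hQ₁, hQ₂, dotProduct_eq_zero_of_mem_span_pair hvw (dot_self_cross v w) hv₁,
    dotProduct_eq_zero_of_mem_span_pair hvw (dot_self_cross v w) hv₂, h₁₂⟩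

/-- If `Q(x) = xᵀ M x` is a traceless quadratic form of rank `3` on `ℝ³` and
`g = ℝ·v` is a line (through the origin) on the equilateral cone `Q(x) = 0`,
then there are lines `g₁ = ℝ·v₁` and `g₂ = ℝ·v₂` on the cone such that
`g`, `g₁`, `g₂` are mutually orthogonal. -/
theorem stmt_12 (M : Matrix (Fin 3) (Fin 3) ℝ) (hsymm : M.IsSymm)
    (htr : M.trace = 0) (hrank : M.rank = 3)
    (v : Fin 3 → ℝ) (hv : v ≠ 0) (hvQ : v ⬝ᵥ M.mulVec v = 0) :
    ∃ v₁ v₂ : Fin 3 → ℝ, v₁ ≠ 0 ∧ v₂ ≠ 0 ∧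
      v₁ ⬝ᵥ M.mulVec v₁ = 0 ∧ v₂ ⬝ᵥ M.mulVec v₂ = 0 ∧
      v ⬝ᵥ v₁ = 0 ∧ v ⬝ᵥ v₂ = 0 ∧ v₁ ⬝ᵥ v₂ = 0 :=
  stmt_12_general M htr v hv hvQ
end

section
/- Let a₀,...,a₃ be a nondegenerate tetrahedron with Monge point at the origin, λ_{ij} := a_i·a_j, b_{ij} := a_i - a_j, and Q*(x) := λ₀₁(x·b₀₁)(x·b₂₃) + λ₀₂(x·b₀₂)(x·b₃₁) + λ₀₃(x·b₀₃)(x·b₁₂). If p lies on an altitude of the tetrahedron, then Q*(p) = (λ₀₁ - λ₀₂)(λ₀₂ - λ₀₃)(λ₀₃ - λ₀₁). -/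
open RealInnerProductSpace

set_option maxHeartbeats 1000000

/-- If the Monge point of the nondegenerate tetrahedron `a 0, …, a 3` is at the
origin and `p` lies on one of the altitudes, then
`Q*(p) = (λ₀₁ - λ₀₂)(λ₀₂ - λ₀₃)(λ₀₃ - λ₀₁)`, where `λ_{rs} := a_r · a_s` and
`Q*(x) := λ₀₁(x·b₀₁)(x·b₂₃) + λ₀₂(x·b₀₂)(x·b₃₁) + λ₀₃(x·b₀₃)(x·b₁₂)`. -/
theorem stmt_17 (a : Fin 4 → EuclideanSpace ℝ (Fin 3))
    (ha : AffineIndependent ℝ a)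
    (hm : ∀ i j k l : Fin 4, i ≠ j → i ≠ k → i ≠ l → j ≠ k → j ≠ l → k ≠ l →
      ⟪a i - a j, a k + a l⟫ = 0)
    (p : EuclideanSpace ℝ (Fin 3)) (m : Fin 4) (hp : p ∈ altitude a m) :
    ⟪a 0, a 1⟫ * (⟪p, a 0 - a 1⟫ * ⟪p, a 2 - a 3⟫) +
      ⟪a 0, a 2⟫ * (⟪p, a 0 - a 2⟫ * ⟪p, a 3 - a 1⟫) +
      ⟪a 0, a 3⟫ * (⟪p, a 0 - a 3⟫ * ⟪p, a 1 - a 2⟫) =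
    (⟪a 0, a 1⟫ - ⟪a 0, a 2⟫) * (⟪a 0, a 2⟫ - ⟪a 0, a 3⟫) *
      (⟪a 0, a 3⟫ - ⟪a 0, a 1⟫) := by
  have _ := ha
  have e1 := hm 0 1 2 3 (by decide) (by decide) (by decide) (by decide) (by decide) (by decide)
  have e2 := hm 0 2 1 3 (by decide) (by decide) (by decide) (by decide) (by decide) (by decide)
  have e3 := hm 0 3 1 2 (by decide) (by decide) (by decide) (by decide) (by decide) (by decide)
  simp only [inner_sub_left, inner_add_right] at e1 e2 e3
  have h1 : ⟪a 2, a 3⟫ = ⟪a 0, a 1⟫ := by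
    linear_combination (e1 - e2 - e3 - real_inner_comm (a 1) (a 2) -
      real_inner_comm (a 1) (a 3) - real_inner_comm (a 2) (a 3)) / 2
  have h2 : ⟪a 1, a 3⟫ = ⟪a 0, a 2⟫ := by
    linear_combination (-e1 + e2 - e3 + real_inner_comm (a 1) (a 2) -
      real_inner_comm (a 1) (a 3) - real_inner_comm (a 2) (a 3)) / 2
  have h3 : ⟪a 1, a 2⟫ = ⟪a 0, a 3⟫ := by
    linear_combination (-e1 - e2 + e3 - real_inner_comm (a 1) (a 2) +
      real_inner_comm (a 1) (a 3) + real_inner_comm (a 2) (a 3)) / 2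
  simp only [inner_sub_right]
  have hm4 : m = 0 ∨ m = 1 ∨ m = 2 ∨ m = 3 := by omega
  rcases hm4 with rfl | rfl | rfl | rfl
  · -- m = 0
    have K1 : ⟪p, a 1⟫ - ⟪p, a 2⟫ = ⟪a 0, a 1⟫ - ⟪a 0, a 2⟫ := by
      have k := hp 1 2 (by decide) (by decide)
      simp only [inner_sub_left, inner_sub_right] at k
      linear_combination -k - real_inner_comm p (a 1) + real_inner_comm p (a 2) + real_inner_comm (a 0) (a 1) - real_inner_comm (a 0) (a 2)
    have K2 : ⟪p, a 2⟫ - ⟪p, a 3⟫ = ⟪a 0, a 2⟫ - ⟪a 0, a 3⟫ := by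
      have k := hp 2 3 (by decide) (by decide)
      simp only [inner_sub_left, inner_sub_right] at k
      linear_combination -k - real_inner_comm p (a 2) + real_inner_comm p (a 3) + real_inner_comm (a 0) (a 2) - real_inner_comm (a 0) (a 3)
    linear_combination (-1) * ⟪a 0, a 1⟫ * ⟪p, a 2⟫ * K1 + (1) * ⟪a 0, a 1⟫ * ⟪p, a 3⟫ * K1 + (-1) * ⟪a 0, a 2⟫ * ⟪p, a 0⟫ * K1 + (1) * ⟪a 0, a 2⟫ * ⟪p, a 2⟫ * K1 + (1) * ⟪a 0, a 3⟫ * ⟪p, a 0⟫ * K1 + (-1) * ⟪a 0, a 3⟫ * ⟪p, a 3⟫ * K1 +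
        (1) * ⟪a 0, a 1⟫ * ⟪a 0, a 2⟫ * K2 + (1) * ⟪a 0, a 1⟫ * ⟪a 0, a 3⟫ * K2 + (1) * ⟪a 0, a 1⟫ * ⟪p, a 0⟫ * K2 + (-1) * ⟪a 0, a 1⟫ * ⟪p, a 2⟫ * K2 + (-1) * ⟪a 0, a 1⟫ * ⟪a 0, a 1⟫ * K2 + (-1) * ⟪a 0, a 2⟫ * ⟪a 0, a 3⟫ * K2 + (-1) * ⟪a 0, a 2⟫ * ⟪p, a 0⟫ * K2 + (1) * ⟪a 0, a 2⟫ * ⟪p, a 2⟫ * K2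
  · -- m = 1
    have K1 : ⟪p, a 0⟫ - ⟪p, a 2⟫ = ⟪a 0, a 1⟫ - ⟪a 1, a 2⟫ := by
      have k := hp 0 2 (by decide) (by decide)
      simp only [inner_sub_left, inner_sub_right] at k
      linear_combination -k - real_inner_comm p (a 0) + real_inner_comm p (a 2) - real_inner_comm (a 1) (a 2)
    have K2 : ⟪p, a 2⟫ - ⟪p, a 3⟫ = ⟪a 1, a 2⟫ - ⟪a 1, a 3⟫ := by
      have k := hp 2 3 (by decide) (by decide)
      simp only [inner_sub_left, inner_sub_right] at k
      linear_combination -k - real_inner_comm p (a 2) + real_inner_comm p (a 3) + real_inner_comm (a 1) (a 2) - real_inner_comm (a 1) (a 3)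
    linear_combination (1) * ⟪a 0, a 1⟫ * ⟪a 0, a 2⟫ * h2 + (1) * ⟪a 0, a 1⟫ * ⟪a 1, a 2⟫ * h2 + (1) * ⟪a 0, a 1⟫ * ⟪p, a 1⟫ * h2 + (-1) * ⟪a 0, a 1⟫ * ⟪p, a 2⟫ * h2 + (-1) * ⟪a 0, a 1⟫ * ⟪a 0, a 1⟫ * h2 + (-1) * ⟪a 0, a 2⟫ * ⟪a 1, a 2⟫ * h2 + (-1) * ⟪a 0, a 3⟫ * ⟪p, a 1⟫ * h2 + (1) * ⟪a 0, a 3⟫ * ⟪p, a 2⟫ * h2 +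
        (-1) * ⟪a 0, a 1⟫ * ⟪a 0, a 3⟫ * h3 + (-1) * ⟪a 0, a 1⟫ * ⟪a 1, a 2⟫ * h3 + (-1) * ⟪a 0, a 1⟫ * ⟪p, a 1⟫ * h3 + (1) * ⟪a 0, a 1⟫ * ⟪p, a 2⟫ * h3 + (1) * ⟪a 0, a 1⟫ * ⟪a 0, a 1⟫ * h3 + (1) * ⟪a 0, a 2⟫ * ⟪a 0, a 3⟫ * h3 + (1) * ⟪a 0, a 2⟫ * ⟪a 1, a 2⟫ * h3 + (1) * ⟪a 0, a 2⟫ * ⟪p, a 1⟫ * h3 + (-1) * ⟪a 0, a 2⟫ * ⟪p, a 2⟫ * h3 + (-1) * ⟪a 0, a 2⟫ * ⟪a 0, a 2⟫ * h3 +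
        (1) * ⟪a 0, a 1⟫ * ⟪p, a 2⟫ * K1 + (-1) * ⟪a 0, a 1⟫ * ⟪p, a 3⟫ * K1 + (-1) * ⟪a 0, a 2⟫ * ⟪p, a 1⟫ * K1 + (1) * ⟪a 0, a 2⟫ * ⟪p, a 3⟫ * K1 + (1) * ⟪a 0, a 3⟫ * ⟪p, a 1⟫ * K1 + (-1) * ⟪a 0, a 3⟫ * ⟪p, a 2⟫ * K1 +
        (-1) * ⟪a 0, a 1⟫ * ⟪a 0, a 2⟫ * K2 + (-1) * ⟪a 0, a 1⟫ * ⟪a 1, a 2⟫ * K2 + (-1) * ⟪a 0, a 1⟫ * ⟪p, a 1⟫ * K2 + (1) * ⟪a 0, a 1⟫ * ⟪p, a 2⟫ * K2 + (1) * ⟪a 0, a 1⟫ * ⟪a 0, a 1⟫ * K2 + (1) * ⟪a 0, a 2⟫ * ⟪a 1, a 2⟫ * K2 + (1) * ⟪a 0, a 3⟫ * ⟪p, a 1⟫ * K2 + (-1) * ⟪a 0, a 3⟫ * ⟪p, a 2⟫ * K2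
  · -- m = 2
    have K1 : ⟪p, a 0⟫ - ⟪p, a 1⟫ = ⟪a 0, a 2⟫ - ⟪a 1, a 2⟫ := by
      have k := hp 0 1 (by decide) (by decide)
      simp only [inner_sub_left, inner_sub_right] at k
      linear_combination -k - real_inner_comm p (a 0) + real_inner_comm p (a 1)
    have K2 : ⟪p, a 1⟫ - ⟪p, a 3⟫ = ⟪a 1, a 2⟫ - ⟪a 2, a 3⟫ := by
      have k := hp 1 3 (by decide) (by decide)
      simp only [inner_sub_left, inner_sub_right] at k
      linear_combination -k - real_inner_comm p (a 1) + real_inner_comm p (a 3) - real_inner_comm (a 2) (a 3)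
    linear_combination (-1) * ⟪a 0, a 1⟫ * ⟪a 0, a 2⟫ * h1 + (1) * ⟪a 0, a 1⟫ * ⟪a 1, a 2⟫ * h1 + (-1) * ⟪a 0, a 2⟫ * ⟪a 1, a 2⟫ * h1 + (1) * ⟪a 0, a 2⟫ * ⟪p, a 1⟫ * h1 + (-1) * ⟪a 0, a 2⟫ * ⟪p, a 2⟫ * h1 + (1) * ⟪a 0, a 2⟫ * ⟪a 0, a 2⟫ * h1 + (-1) * ⟪a 0, a 3⟫ * ⟪p, a 1⟫ * h1 + (1) * ⟪a 0, a 3⟫ * ⟪p, a 2⟫ * h1 +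
        (-1) * ⟪a 0, a 1⟫ * ⟪a 0, a 3⟫ * h3 + (-1) * ⟪a 0, a 1⟫ * ⟪a 1, a 2⟫ * h3 + (1) * ⟪a 0, a 1⟫ * ⟪p, a 1⟫ * h3 + (-1) * ⟪a 0, a 1⟫ * ⟪p, a 2⟫ * h3 + (1) * ⟪a 0, a 1⟫ * ⟪a 0, a 1⟫ * h3 + (1) * ⟪a 0, a 2⟫ * ⟪a 0, a 3⟫ * h3 + (1) * ⟪a 0, a 2⟫ * ⟪a 1, a 2⟫ * h3 + (-1) * ⟪a 0, a 2⟫ * ⟪p, a 1⟫ * h3 + (1) * ⟪a 0, a 2⟫ * ⟪p, a 2⟫ * h3 + (-1) * ⟪a 0, a 2⟫ * ⟪a 0, a 2⟫ * h3 +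
        (1) * ⟪a 0, a 1⟫ * ⟪p, a 2⟫ * K1 + (-1) * ⟪a 0, a 1⟫ * ⟪p, a 3⟫ * K1 + (-1) * ⟪a 0, a 2⟫ * ⟪p, a 1⟫ * K1 + (1) * ⟪a 0, a 2⟫ * ⟪p, a 3⟫ * K1 + (1) * ⟪a 0, a 3⟫ * ⟪p, a 1⟫ * K1 + (-1) * ⟪a 0, a 3⟫ * ⟪p, a 2⟫ * K1 +
        (1) * ⟪a 0, a 1⟫ * ⟪a 0, a 2⟫ * K2 + (-1) * ⟪a 0, a 1⟫ * ⟪a 1, a 2⟫ * K2 + (1) * ⟪a 0, a 2⟫ * ⟪a 1, a 2⟫ * K2 + (-1) * ⟪a 0, a 2⟫ * ⟪p, a 1⟫ * K2 + (1) * ⟪a 0, a 2⟫ * ⟪p, a 2⟫ * K2 + (-1) * ⟪a 0, a 2⟫ * ⟪a 0, a 2⟫ * K2 + (1) * ⟪a 0, a 3⟫ * ⟪p, a 1⟫ * K2 + (-1) * ⟪a 0, a 3⟫ * ⟪p, a 2⟫ * K2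
  · -- m = 3
    have K1 : ⟪p, a 0⟫ - ⟪p, a 1⟫ = ⟪a 0, a 3⟫ - ⟪a 1, a 3⟫ := by
      have k := hp 0 1 (by decide) (by decide)
      simp only [inner_sub_left, inner_sub_right] at k
      linear_combination -k - real_inner_comm p (a 0) + real_inner_comm p (a 1)
    have K2 : ⟪p, a 1⟫ - ⟪p, a 2⟫ = ⟪a 1, a 3⟫ - ⟪a 2, a 3⟫ := by
      have k := hp 1 2 (by decide) (by decide)
      simp only [inner_sub_left, inner_sub_right] at k
      linear_combination -k - real_inner_comm p (a 1) + real_inner_comm p (a 2)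
    linear_combination (1) * ⟪a 0, a 1⟫ * ⟪a 0, a 3⟫ * h1 + (-1) * ⟪a 0, a 1⟫ * ⟪a 1, a 3⟫ * h1 + (1) * ⟪a 0, a 2⟫ * ⟪p, a 1⟫ * h1 + (-1) * ⟪a 0, a 2⟫ * ⟪p, a 3⟫ * h1 + (1) * ⟪a 0, a 3⟫ * ⟪a 1, a 3⟫ * h1 + (-1) * ⟪a 0, a 3⟫ * ⟪p, a 1⟫ * h1 + (1) * ⟪a 0, a 3⟫ * ⟪p, a 3⟫ * h1 + (-1) * ⟪a 0, a 3⟫ * ⟪a 0, a 3⟫ * h1 +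
        (1) * ⟪a 0, a 1⟫ * ⟪a 0, a 2⟫ * h2 + (1) * ⟪a 0, a 1⟫ * ⟪a 1, a 3⟫ * h2 + (-1) * ⟪a 0, a 1⟫ * ⟪p, a 1⟫ * h2 + (1) * ⟪a 0, a 1⟫ * ⟪p, a 3⟫ * h2 + (-1) * ⟪a 0, a 1⟫ * ⟪a 0, a 1⟫ * h2 + (-1) * ⟪a 0, a 2⟫ * ⟪a 0, a 3⟫ * h2 + (-1) * ⟪a 0, a 3⟫ * ⟪a 1, a 3⟫ * h2 + (1) * ⟪a 0, a 3⟫ * ⟪p, a 1⟫ * h2 + (-1) * ⟪a 0, a 3⟫ * ⟪p, a 3⟫ * h2 + (1) * ⟪a 0, a 3⟫ * ⟪a 0, a 3⟫ * h2 +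
        (1) * ⟪a 0, a 1⟫ * ⟪p, a 2⟫ * K1 + (-1) * ⟪a 0, a 1⟫ * ⟪p, a 3⟫ * K1 + (-1) * ⟪a 0, a 2⟫ * ⟪p, a 1⟫ * K1 + (1) * ⟪a 0, a 2⟫ * ⟪p, a 3⟫ * K1 + (1) * ⟪a 0, a 3⟫ * ⟪p, a 1⟫ * K1 + (-1) * ⟪a 0, a 3⟫ * ⟪p, a 2⟫ * K1 +
        (-1) * ⟪a 0, a 1⟫ * ⟪a 0, a 3⟫ * K2 + (1) * ⟪a 0, a 1⟫ * ⟪a 1, a 3⟫ * K2 + (-1) * ⟪a 0, a 2⟫ * ⟪p, a 1⟫ * K2 + (1) * ⟪a 0, a 2⟫ * ⟪p, a 3⟫ * K2 + (-1) * ⟪a 0, a 3⟫ * ⟪a 1, a 3⟫ * K2 + (1) * ⟪a 0, a 3⟫ * ⟪p, a 1⟫ * K2 + (-1) * ⟪a 0, a 3⟫ * ⟪p, a 3⟫ * K2 + (1) * ⟪a 0, a 3⟫ * ⟪a 0, a 3⟫ * K2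
end

section
/- With the Monge point as origin, the altitudes h_i and h_j of a nondegenerate tetrahedron meet if and only if λ_{ki} = λ_{li} (equivalently λ_{lj} = λ_{kj}), where λ_{rs} = a_r·a_s and {i,j,k,l} = {0,1,2,3}; in particular b_{kl}·b_{ij} = 2(λ_{ki} - λ_{li}). -/
/-! The Monge condition `⟪b_kl, a_i + a_j⟫ = 0` turns `b_kl · b_ij` into `2 b_kl · a_i`.
Writing `F_m` for the direction of the face opposite `a_m`, a common point `x` of `h_i` and `h_j`
amounts to a splitting `a_i - a_j = (a_i - x) - (a_j - x)` with summands in `F_iᗮ` and `F_jᗮ`,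
so the altitudes meet iff `b_ij ∈ F_iᗮ ⊔ F_jᗮ = (F_i ⊓ F_j)ᗮ`. By affine independence
`F_i ⊓ F_j` is the line spanned by `b_kl`, which leaves the condition `b_kl · b_ij = 0`. -/

open RealInnerProductSpace

open Submodule

theorem LinearIndependent.span_image_inf_span_image {ι R M : Type*} [Ring R] [AddCommGroup M]
    [Module R M] {v : ι → M} (hv : LinearIndependent R v) (s t : Set ι) :
    span R (v '' s) ⊓ span R (v '' t) = span R (v '' (s ∩ t)) := by
  refine le_antisymm ?_ (le_inf (span_mono (Set.image_mono Set.inter_subset_left))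
    (span_mono (Set.image_mono Set.inter_subset_right)))
  intro x hx
  obtain ⟨l₁, hl₁, rfl⟩ := (Finsupp.mem_span_image_iff_linearCombination R).mp (mem_inf.mp hx).1
  obtain ⟨l₂, hl₂, h⟩ := (Finsupp.mem_span_image_iff_linearCombination R).mp (mem_inf.mp hx).2
  rw [hv.finsuppLinearCombination_injective.eq_iff] at h
  subst h
  exact (Finsupp.mem_span_image_iff_linearCombination R).mpr
    ⟨l₂, by rw [Finsupp.supported_inter]; exact mem_inf.mpr ⟨hl₁, hl₂⟩, rfl⟩

theorem AffineIndependent.span_vsub_pair_inf_span_vsub_pair_le {ι R V P : Type*} [Ring R]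
    [AddCommGroup V] [Module R V] [AddTorsor V P] {p : ι → P} (hp : AffineIndependent R p)
    {i j k l : ι} (hij : i ≠ j) (hil : i ≠ l) (hjl : j ≠ l) (hkl : k ≠ l) :
    span R {p j -ᵥ p l, p k -ᵥ p l} ⊓ span R {p i -ᵥ p l, p k -ᵥ p l} ≤
      span R {p k -ᵥ p l} := by
  have hv := (affineIndependent_iff_linearIndependent_vsub R p l).mp hp
  have h := hv.span_image_inf_span_image {⟨j, hjl⟩, ⟨k, hkl⟩} {⟨i, hil⟩, ⟨k, hkl⟩}
  simp only [Set.image_pair] at h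
  rw [h]
  refine span_mono ?_
  rintro _ ⟨x, ⟨hxs, hxt⟩, rfl⟩
  simp only [Set.mem_insert_iff, Set.mem_singleton_iff, Subtype.ext_iff] at hxs hxt ⊢
  obtain hx | hx := hxs
  · obtain hx' | hx' := hxt
    · exact absurd (hx'.symm.trans hx) hij
    · rw [hx']
  · rw [hx]

theorem Submodule.orthogonal_inf {𝕜 E : Type*} [RCLike 𝕜] [NormedAddCommGroup E]
    [InnerProductSpace 𝕜 E] [FiniteDimensional 𝕜 E] (K L : Submodule 𝕜 E) :
    (K ⊓ L)ᗮ = Kᗮ ⊔ Lᗮ := by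
  rw [← orthogonal_orthogonal (Kᗮ ⊔ Lᗮ), ← inf_orthogonal, orthogonal_orthogonal,
    orthogonal_orthogonal]

theorem Submodule.mem_orthogonal_span_pair {𝕜 E : Type*} [RCLike 𝕜] [NormedAddCommGroup E]
    [InnerProductSpace 𝕜 E] {u v y : E} :
    y ∈ (span 𝕜 {u, v})ᗮ ↔ inner 𝕜 u y = 0 ∧ inner 𝕜 v y = 0 := by
  rw [span_insert, ← inf_orthogonal, mem_inf, mem_orthogonal_singleton_iff_inner_right,
    mem_orthogonal_singleton_iff_inner_right]

theorem inner_sub_sub_of_inner_sub_add_eq_zero {E : Type*} [NormedAddCommGroup E]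
    [InnerProductSpace ℝ E] {x y z w : E} (h : ⟪x - y, z + w⟫ = 0) :
    ⟪x - y, z - w⟫ = 2 * (⟪x, z⟫ - ⟪y, z⟫) := by
  simp only [inner_sub_left, inner_sub_right, inner_add_right] at h ⊢
  linarith

theorem fin_four_eq_or_eq_or_eq_of_ne {i j k l m : Fin 4}
    (hij : i ≠ j) (hik : i ≠ k) (hil : i ≠ l) (hjk : j ≠ k) (hjl : j ≠ l) (hkl : k ≠ l)
    (hm : m ≠ i) : m = j ∨ m = k ∨ m = l := by
  revert i j k l m; decide

theorem mem_altitude_iff_s18 {a : Fin 4 → EuclideanSpace ℝ (Fin 3)} {i j k l : Fin 4}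
    (hij : i ≠ j) (hik : i ≠ k) (hil : i ≠ l) (hjk : j ≠ k) (hjl : j ≠ l) (hkl : k ≠ l)
    {x : EuclideanSpace ℝ (Fin 3)} :
    x ∈ altitude a i ↔ a i - x ∈ (span ℝ {a j - a l, a k - a l})ᗮ := by
  rw [mem_orthogonal_span_pair]
  refine ⟨fun h ↦ ⟨h j l hij.symm hil.symm, h k l hik.symm hil.symm⟩, fun ⟨hj, hk⟩ r s hr hs ↦ ?_⟩
  have hbase : ∀ m, m ≠ i → ⟪a m - a l, a i - x⟫ = 0 := by
    intro m hm
    rcases fin_four_eq_or_eq_or_eq_of_ne hij hik hil hjk hjl hkl hm with rfl | rfl | rfl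
    exacts [hj, hk, by simp]
  rw [← sub_sub_sub_cancel_right (a r) (a s) (a l), inner_sub_left, hbase r hr, hbase s hs,
    sub_zero]

theorem altitudes_meet_iff {a : Fin 4 → EuclideanSpace ℝ (Fin 3)} (ha : AffineIndependent ℝ a)
    {i j k l : Fin 4}
    (hij : i ≠ j) (hik : i ≠ k) (hil : i ≠ l) (hjk : j ≠ k) (hjl : j ≠ l) (hkl : k ≠ l) :
    (∃ x, x ∈ altitude a i ∧ x ∈ altitude a j) ↔ ⟪a k - a l, a i - a j⟫ = 0 := by
  simp only [mem_altitude_iff_s18 hij hik hil hjk hjl hkl,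
    mem_altitude_iff_s18 hij.symm hjk hjl hik hil hkl]
  constructor
  · rintro ⟨x, hi, hj⟩
    have hw : a k - a l ∈ span ℝ {a j - a l, a k - a l} := subset_span (by simp)
    have hw' : a k - a l ∈ span ℝ {a i - a l, a k - a l} := subset_span (by simp)
    rw [← sub_sub_sub_cancel_right (a i) (a j) x, inner_sub_right,
      inner_right_of_mem_orthogonal hw hi, inner_right_of_mem_orthogonal hw' hj, sub_zero]
  · intro h
    have hz := orthogonal_le (ha.span_vsub_pair_inf_span_vsub_pair_le hij hil hjl hkl)
      (mem_orthogonal_singleton_iff_inner_right.mpr h)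
    rw [orthogonal_inf] at hz
    obtain ⟨p, hp, q, hq, hpq⟩ := mem_sup.mp hz
    refine ⟨a i - p, by simpa using hp, ?_⟩
    rw [show a j - (a i - p) = -q by rw [eq_sub_of_add_eq' hpq]; abel]
    exact neg_mem hq

/-- With the Monge point of a nondegenerate tetrahedron at the origin and
`λ_{rs} := a_r · a_s`, one has `b_{kl}·b_{ij} = 2(λ_{ki} - λ_{li})`, and the
altitudes `h_i` and `h_j` meet if and only if `λ_{ki} = λ_{li}`. -/
theorem stmt_18 (a : Fin 4 → EuclideanSpace ℝ (Fin 3))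
    (ha : AffineIndependent ℝ a)
    (hm : ∀ i j k l : Fin 4, i ≠ j → i ≠ k → i ≠ l → j ≠ k → j ≠ l → k ≠ l →
      ⟪a i - a j, a k + a l⟫ = 0)
    (i j k l : Fin 4) (hij : i ≠ j) (hik : i ≠ k) (hil : i ≠ l)
    (hjk : j ≠ k) (hjl : j ≠ l) (hkl : k ≠ l) :
    ⟪a k - a l, a i - a j⟫ = 2 * (⟪a k, a i⟫ - ⟪a l, a i⟫) ∧
    ((∃ x, x ∈ altitude a i ∧ x ∈ altitude a j) ↔ ⟪a k, a i⟫ = ⟪a l, a i⟫) := by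
  have hmonge := inner_sub_sub_of_inner_sub_add_eq_zero
    (hm k l i j hkl hik.symm hjk.symm hil.symm hjl.symm hij)
  refine ⟨hmonge, ?_⟩
  rw [altitudes_meet_iff ha hij hik hil hjk hjl hkl, hmonge, mul_eq_zero, sub_eq_zero]
  exact or_iff_right two_ne_zero
end

section
/- Under the assumptions of the previous setup, if the four altitudes of the tetrahedron are mutually skew (equivalently λ₀₁, λ₀₂, λ₀₃ are pairwise distinct), then the traceless quadratic form Q* is not identically zero; in fact Q*(a_m) ≠ 0 for each vertex a_m. -/
open RealInnerProductSpace

/-- If the Monge point of the nondegenerate tetrahedron `a 0, …, a 3` is at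
the origin and the four altitudes are mutually skew (equivalently, the scalars
`λ₀₁, λ₀₂, λ₀₃` with `λ_{rs} := a_r · a_s` are pairwise distinct), then the
traceless quadratic form
`Q*(x) := λ₀₁(x·b₀₁)(x·b₂₃) + λ₀₂(x·b₀₂)(x·b₃₁) + λ₀₃(x·b₀₃)(x·b₁₂)` takes a
nonzero value at every vertex; in particular `Q*` is not identically zero. -/
theorem stmt_19 (a : Fin 4 → EuclideanSpace ℝ (Fin 3))
    (ha : AffineIndependent ℝ a)
    (hm : ∀ i j k l : Fin 4, i ≠ j → i ≠ k → i ≠ l → j ≠ k → j ≠ l → k ≠ l →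
      ⟪a i - a j, a k + a l⟫ = 0)
    (h12 : ⟪a 0, a 1⟫ ≠ ⟪a 0, a 2⟫) (h13 : ⟪a 0, a 1⟫ ≠ ⟪a 0, a 3⟫)
    (h23 : ⟪a 0, a 2⟫ ≠ ⟪a 0, a 3⟫) :
    ∀ m : Fin 4,
      ⟪a 0, a 1⟫ * (⟪a m, a 0 - a 1⟫ * ⟪a m, a 2 - a 3⟫) +
        ⟪a 0, a 2⟫ * (⟪a m, a 0 - a 2⟫ * ⟪a m, a 3 - a 1⟫) +
        ⟪a 0, a 3⟫ * (⟪a m, a 0 - a 3⟫ * ⟪a m, a 1 - a 2⟫) ≠ 0 := by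
  have e1 := hm 0 1 2 3 (by decide) (by decide) (by decide) (by decide) (by decide) (by decide)
  have e2 := hm 0 2 1 3 (by decide) (by decide) (by decide) (by decide) (by decide) (by decide)
  have e3 := hm 0 3 1 2 (by decide) (by decide) (by decide) (by decide) (by decide) (by decide)
  simp only [inner_sub_left, inner_add_right, real_inner_comm (a 1) (a 2),
    real_inner_comm (a 1) (a 3), real_inner_comm (a 2) (a 3)] at e1 e2 e3
  have q12 : ⟪a 1, a 2⟫ = ⟪a 0, a 3⟫ := by linarith
  have q13 : ⟪a 1, a 3⟫ = ⟪a 0, a 2⟫ := by linarith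
  have q23 : ⟪a 2, a 3⟫ = ⟪a 0, a 1⟫ := by linarith
  have hprod : (⟪a 0, a 1⟫ - ⟪a 0, a 2⟫) *
      ((⟪a 0, a 2⟫ - ⟪a 0, a 3⟫) * (⟪a 0, a 3⟫ - ⟪a 0, a 1⟫)) ≠ 0 :=
    mul_ne_zero (sub_ne_zero.mpr h12)
      (mul_ne_zero (sub_ne_zero.mpr h23) (sub_ne_zero.mpr (Ne.symm h13)))
  intro m
  have hc : m = 0 ∨ m = 1 ∨ m = 2 ∨ m = 3 := by omega
  rcases hc with rfl | rfl | rfl | rfl <;>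
    simp only [inner_sub_right, real_inner_comm (a 0) (a 1), real_inner_comm (a 0) (a 2),
      real_inner_comm (a 0) (a 3), real_inner_comm (a 1) (a 2), real_inner_comm (a 1) (a 3),
      real_inner_comm (a 2) (a 3), q12, q13, q23] <;>
    exact fun h => hprod (by linear_combination h)
end
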